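/- If G is a graph with no isolated vertex and H is a nontrivial graph with γ(H)≥3, then the secure total domination number of the lexicographic product satisfies γ^s_{(1,1)}(G∘H) = γ_{(2,2,2)}(G). -/

import Mathlib

namespace SecureW

open Finset

/-- Lexicographic product of simple graphs. -/
def lexProd {α β : Type*} (G : SimpleGraph α) (H : SimpleGraph β) :
    SimpleGraph (α × β) where
  Adj p q := G.Adj p.1 q.1 ∨ (p.1 = q.1 ∧ H.Adj p.2 q.2)
  symm := by
    constructor
    rintro p q (h | ⟨h1, h2⟩)
    · exact Or.inl h.symm
    · exact Or.inr ⟨h1.symm, h2.symm⟩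
  loopless := by
    constructor
    rintro p (h | ⟨_, h⟩)
    · exact G.irrefl h
    · exact H.irrefl h

open scoped Classical in
/-- Sum of `f` over the open neighbourhood of `v`. -/
noncomputable def nbrSum {V : Type*} [Fintype V] (G : SimpleGraph V) (f : V → ℕ) (v : V) : ℕ :=
  ∑ u ∈ Finset.univ.filter (fun u => G.Adj v u), f u

/-- `f` is a `w`-dominating function, where `w` is given as a list `(w_0, …, w_l)`. -/
def IsWDom {V : Type*} [Fintype V] (G : SimpleGraph V) (ws : List ℕ) (f : V → ℕ) : Prop :=
  (∀ v, f v < ws.length) ∧ ∀ v, ws.getD (f v) 0 ≤ nbrSum G f v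

/-- The function obtained from `f` by moving one unit of weight from `u` to `v`. -/
def move {V : Type*} [DecidableEq V] (f : V → ℕ) (u v : V) : V → ℕ :=
  fun x => if x = v then 1 else if x = u then f u - 1 else f x

open scoped Classical in
/-- `f` is a secure `w`-dominating function. -/
def IsSecureWDom {V : Type*} [Fintype V] (G : SimpleGraph V) (ws : List ℕ) (f : V → ℕ) : Prop :=
  IsWDom G ws f ∧ ∀ v, f v = 0 → ∃ u, G.Adj v u ∧ 0 < f u ∧ IsWDom G ws (move f u v)

/-- The weight of a function. -/
noncomputable def weight {V : Type*} [Fintype V] (f : V → ℕ) : ℕ := ∑ v, f v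

/-- The `w`-domination number. -/
noncomputable def wDomNum {V : Type*} [Fintype V] (G : SimpleGraph V) (ws : List ℕ) : ℕ :=
  sInf {k | ∃ f, IsWDom G ws f ∧ weight f = k}

/-- The secure `w`-domination number. -/
noncomputable def secWDomNum {V : Type*} [Fintype V] (G : SimpleGraph V) (ws : List ℕ) : ℕ :=
  sInf {k | ∃ f, IsSecureWDom G ws f ∧ weight f = k}

/-- The (ordinary) domination number, as `γ_{(1,0)}`. -/
noncomputable def domNum {V : Type*} [Fintype V] (G : SimpleGraph V) : ℕ :=
  wDomNum G [1, 0]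

/-- `G` has no isolated vertex. -/
def NoIsolated {V : Type*} (G : SimpleGraph V) : Prop := ∀ v, ∃ u, G.Adj v u

end SecureW

namespace SecureWAux
open Finset SecureW

open scoped Classical

lemma nbrSum_eq {V : Type*} [Fintype V] (G : SimpleGraph V) (f : V → ℕ) (v : V) :
    nbrSum G f v = ∑ u, if G.Adj v u then f u else 0 := by
  rw [nbrSum, Finset.sum_filter]

lemma sum_if_pos_exists {V : Type*} [Fintype V] {P : V → Prop} {f : V → ℕ}
    (h : 1 ≤ ∑ u, if P u then f u else 0) : ∃ u, P u ∧ 1 ≤ f u := by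
  by_contra hc
  push_neg at hc
  have : (∑ u, if P u then f u else 0) = 0 := by
    apply Finset.sum_eq_zero
    intro u _
    by_cases hp : P u
    · simp [hp]; have := hc u hp; omega
    · simp [hp]
  omega

lemma le_sum_if {V : Type*} [Fintype V] {P : V → Prop} {f : V → ℕ} (u : V) (hP : P u) :
    f u ≤ ∑ x, if P x then f x else 0 := by
  have h := Finset.single_le_sum (f := fun x => if P x then f x else 0)
    (fun i _ => Nat.zero_le _) (Finset.mem_univ u)
  simpa [hP] using h

lemma pair_le_sum {V : Type*} [Fintype V] {P : V → Prop} {f : V → ℕ} {u u' : V}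
    (hne : u ≠ u') (hu : P u) (hu' : P u') :
    f u + f u' ≤ ∑ x, if P x then f x else 0 := by
  classical
  have hsub : ({u, u'} : Finset V) ⊆ Finset.univ := Finset.subset_univ _
  have h1 : ∑ x ∈ ({u, u'} : Finset V), (if P x then f x else 0) ≤
      ∑ x, if P x then f x else 0 :=
    Finset.sum_le_sum_of_subset_of_nonneg hsub (fun _ _ _ => Nat.zero_le _)
  rw [Finset.sum_pair hne] at h1
  simpa [hu, hu'] using h1

lemma dichotomy {V : Type*} [Fintype V] {P : V → Prop} {f : V → ℕ}
    (hle : ∀ u, f u ≤ 2) (h : 2 ≤ ∑ u, if P u then f u else 0) :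
    (∃ u, P u ∧ f u = 2) ∨ ∃ u u', u ≠ u' ∧ P u ∧ P u' ∧ 1 ≤ f u ∧ 1 ≤ f u' := by
  by_contra hc
  push_neg at hc
  obtain ⟨h2, h3⟩ := hc
  obtain ⟨u0, hu0, hu0f⟩ := sum_if_pos_exists (P := P) (f := f) (by omega)
  have hsum : (∑ u, if P u then f u else 0) = if P u0 then f u0 else 0 := by
    apply Finset.sum_eq_single
    · intro b _ hb
      by_cases hp : P b
      · simp only [hp, if_true]
        by_contra hfb
        have := h3 b u0 hb hp hu0 (by omega)
        omega
      · simp [hp]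
    · intro hu; exact absurd (Finset.mem_univ u0) hu
  have := h2 u0 hu0
  have := hle u0
  rw [hsum] at h
  rw [if_pos hu0] at h
  omega

lemma min2_sum {V : Type*} [Fintype V] (P : V → Prop) (f : V → ℕ) :
    min 2 (∑ u, if P u then f u else 0) ≤ ∑ u, if P u then min 2 (f u) else 0 := by
  classical
  have key : ∀ s : Finset V, min 2 (∑ u ∈ s, if P u then f u else 0) ≤
      ∑ u ∈ s, if P u then min 2 (f u) else 0 := by
    intro s
    induction s using Finset.induction_on with
    | empty => simp
    | insert a s hnotmem ih =>
      rw [Finset.sum_insert hnotmem, Finset.sum_insert hnotmem]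
      split_ifs <;> omega
  exact key Finset.univ

lemma getD11 {n : ℕ} (h : n < 2) : [1,1].getD n 0 = 1 := by
  interval_cases n <;> rfl

lemma getD222 {n : ℕ} (h : n < 3) : [2,2,2].getD n 0 = 2 := by
  interval_cases n <;> rfl


lemma move_congr {V : Type*} {i1 : DecidableEq V} [i2 : DecidableEq V]
    (f : V → ℕ) (u v : V) : @move V i1 f u v = @move V i2 f u v := by
  have : i1 = i2 := funext fun a => funext fun b => Subsingleton.elim _ _
  subst this
  rfl

lemma lex_nbrSum {α β : Type*} [Fintype α] [Fintype β] (G : SimpleGraph α) (H : SimpleGraph β)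
    (f : α × β → ℕ) (v : α) (b : β) :
    nbrSum (lexProd G H) f (v, b) =
      (∑ u, if G.Adj v u then (∑ c, f (u, c)) else 0) +
      ∑ c, if H.Adj b c then f (v, c) else 0 := by
  rw [nbrSum_eq, Fintype.sum_prod_type]
  have hsplit : ∀ u c, (if (lexProd G H).Adj (v, b) (u, c) then f (u, c) else 0) =
      (if G.Adj v u then f (u, c) else 0) + (if v = u ∧ H.Adj b c then f (u, c) else 0) := by
    intro u c
    by_cases hg : G.Adj v u
    · have hne : ¬(v = u) := fun h => G.irrefl (h ▸ hg)
      simp [lexProd, hg, hne]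
    · simp [lexProd, hg]
  simp only [hsplit, Finset.sum_add_distrib]
  congr 1
  · apply Finset.sum_congr rfl
    intro u _
    by_cases hg : G.Adj v u <;> simp [hg]
  · rw [Finset.sum_comm]
    apply Finset.sum_congr rfl
    intro c _
    by_cases hh : H.Adj b c
    · simp only [hh, and_true]
      rw [Finset.sum_eq_single v]
      · simp
      · intro u _ hu; simp [Ne.symm hu]
      · intro hv; exact absurd (Finset.mem_univ v) hv
    · simp [hh]

lemma exists_undominated {β : Type*} [Fintype β] (H : SimpleGraph β)
    (h1 : 3 ≤ domNum H) (D : Finset β) (hcard : D.card ≤ 2) :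
    ∃ b, b ∉ D ∧ ∀ c ∈ D, ¬ H.Adj b c := by
  by_contra hc
  push_neg at hc
  -- hc : ∀ b, b ∉ D → ∃ c ∈ D, H.Adj b c
  set g0 : β → ℕ := fun b => if b ∈ D then 1 else 0 with hg0
  have hwd : IsWDom H [1, 0] g0 := by
    constructor
    · intro b; simp only [hg0, List.length]; split_ifs <;> omega
    · intro b
      by_cases hb : b ∈ D
      · simp [hg0, hb]
      · simp only [hg0, hb, if_false]
        obtain ⟨c, hcD, hadj⟩ := hc b hb
        rw [nbrSum_eq]
        have h2 := le_sum_if (P := H.Adj b) (f := g0) c hadj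
        simp only [hg0, hcD, if_true] at h2
        simpa using h2
  have hw : weight g0 = D.card := by
    simp only [weight, hg0, Finset.sum_ite_mem, Finset.univ_inter, Finset.sum_const,
      smul_eq_mul, mul_one]
  have : domNum H ≤ D.card := Nat.sInf_le ⟨g0, hwd, hw⟩
  omega


lemma key_claim {α β : Type*} [Fintype α] [Fintype β] (G : SimpleGraph α) (H : SimpleGraph β)
    (hG : NoIsolated G) [Nonempty β] (h1 : 3 ≤ domNum H) (f : α × β → ℕ)
    (hf : IsSecureWDom (lexProd G H) [1,1] f) (v : α)
    (hbad : (∑ u, if G.Adj v u then (∑ c, f (u, c)) else 0) ≤ 1) :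
    ∃ u, G.Adj v u ∧ 2 - min 2 (∑ c, f (u, c)) + 2 ≤ ∑ c, f (v, c) := by
  have hfle : ∀ p, f p ≤ 1 := by
    intro p; have := hf.1.1 p; simp at this; omega
  have htd : ∀ p, 1 ≤ nbrSum (lexProd G H) f p := by
    intro p; have h := hf.1.2 p
    rwa [getD11 (by simpa using hf.1.1 p)] at h
  set s : α → ℕ := fun x => ∑ c, f (x, c) with hs
  have hbads : (∑ u, if G.Adj v u then s u else 0) ≤ 1 := hbad
  set D : Finset β := Finset.univ.filter (fun c => 1 ≤ f (v, c)) with hD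
  have hDcard : D.card ≤ s v := by
    rw [hD, hs]
    rw [Finset.card_filter]
    apply Finset.sum_le_sum
    intro c _
    split_ifs with h <;> omega
  have hDmem : ∀ c, c ∈ D ↔ 1 ≤ f (v, c) := by
    intro c; rw [hD]; simp
  by_cases hz : (∑ u, if G.Adj v u then s u else 0) = 0
  · -- external weight 0 : show 4 ≤ s v
    have hzero : ∀ u, G.Adj v u → ∀ c, f (u, c) = 0 := by
      intro u hu c
      have h := (Finset.sum_eq_zero_iff.mp hz) u (Finset.mem_univ u)
      rw [if_pos hu] at h
      exact (Finset.sum_eq_zero_iff.mp h) c (Finset.mem_univ c)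
    have hTD : ∀ b, ∃ e, H.Adj b e ∧ 1 ≤ f (v, e) := by
      intro b
      have h := htd (v, b)
      rw [lex_nbrSum] at h
      have hA : (∑ u, if G.Adj v u then (∑ c, f (u, c)) else 0) = 0 := by
        apply Finset.sum_eq_zero
        intro u _
        by_cases hu : G.Adj v u
        · rw [if_pos hu]; exact Finset.sum_eq_zero (fun c _ => hzero u hu c)
        · rw [if_neg hu]
      rw [hA] at h
      exact sum_if_pos_exists (by omega)
    by_cases hsv : 4 ≤ s v
    · obtain ⟨u, hu⟩ := hG v
      have e1 : s u = ∑ c, f (u, c) := rfl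
      have e2 : s v = ∑ c, f (v, c) := rfl
      exact ⟨u, hu, by omega⟩
    exfalso
    obtain ⟨d3, _, hd3pos⟩ := hTD (Classical.arbitrary β)
    have hd3D : d3 ∈ D := (hDmem d3).mpr hd3pos
    obtain ⟨e3, he3adj, he3pos⟩ := hTD d3
    have he3D : e3 ∈ D := (hDmem e3).mpr he3pos
    have he3ne : e3 ≠ d3 := fun h => H.irrefl (h ▸ he3adj)
    have hD'card : (D.erase d3).card ≤ 2 := by
      rw [Finset.card_erase_of_mem hd3D]; omega
    obtain ⟨bs, hbsD', hbsnd⟩ := exists_undominated H h1 (D.erase d3) hD'card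
    have hbsd3 : bs ≠ d3 := by
      intro h
      exact hbsnd e3 (Finset.mem_erase.mpr ⟨he3ne, he3D⟩) (h ▸ he3adj)
    have hbsD : bs ∉ D := fun h => hbsD' (Finset.mem_erase.mpr ⟨hbsd3, h⟩)
    have hfbs : f (v, bs) = 0 := by
      have := (hDmem bs).not.mp hbsD; omega
    obtain ⟨⟨w, c⟩, hadj, hpos, hmv⟩ := hf.2 (v, bs) hfbs
    have hadj' : G.Adj v w ∨ (v = w ∧ H.Adj bs c) := hadj
    rcases hadj' with hGadj | ⟨heq, hHadj⟩
    · exact absurd (hzero w hGadj c) (by omega)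
    subst heq
    have hcD : c ∈ D := (hDmem c).mpr (by omega)
    have hcd3 : c = d3 := by
      by_contra hcon
      exact hbsnd c (Finset.mem_erase.mpr ⟨hcon, hcD⟩) hHadj
    subst hcd3
    have h2 := hmv.2 (v, bs)
    rw [move_congr f (v, c) (v, bs)] at h2
    have hval : move f (v, c) (v, bs) (v, bs) = 1 := by simp [move]
    rw [hval] at h2
    rw [lex_nbrSum] at h2
    have hA : (∑ u, if G.Adj v u then (∑ c', move f (v, c) (v, bs) (u, c')) else 0) = 0 := by
      apply Finset.sum_eq_zero
      intro u _
      by_cases hu : G.Adj v u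
      · rw [if_pos hu]
        apply Finset.sum_eq_zero
        intro c' _
        have hne : u ≠ v := (G.ne_of_adj hu).symm
        have : move f (v, c) (v, bs) (u, c') = f (u, c') := by
          simp [move, Prod.ext_iff, hne]
        rw [this]
        exact hzero u hu c'
      · rw [if_neg hu]
    have hB : (∑ e, if H.Adj bs e then move f (v, c) (v, bs) (v, e) else 0) = 0 := by
      apply Finset.sum_eq_zero
      intro e _
      by_cases he : H.Adj bs e
      · rw [if_pos he]
        have hebs : e ≠ bs := fun h => H.irrefl (h ▸ he)
        by_cases hec : e = c
        · subst hec
          have : move f (v, e) (v, bs) (v, e) = f (v, e) - 1 := by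
            simp [move, Prod.ext_iff, hebs]
          rw [this]
          have := hfle (v, e); omega
        · have heD : e ∉ D := by
            intro hmem
            exact hbsnd e (Finset.mem_erase.mpr ⟨hec, hmem⟩) he
          have : move f (v, c) (v, bs) (v, e) = f (v, e) := by
            simp [move, Prod.ext_iff, hebs, hec]
          rw [this]
          have := (hDmem e).not.mp heD; omega
      · rw [if_neg he]
    rw [hA, hB] at h2
    simp at h2
  · -- external weight 1 : show 3 ≤ s v via witness u0 with s u0 = 1
    have hsum1 : (∑ u, if G.Adj v u then s u else 0) = 1 := by omega
    obtain ⟨u0, hu0adj, hu0pos⟩ := sum_if_pos_exists (P := G.Adj v) (f := s) (by omega)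
    have hsu0 : s u0 = 1 := by
      have := le_sum_if (P := G.Adj v) (f := s) u0 hu0adj
      omega
    have hother : ∀ u, G.Adj v u → u ≠ u0 → s u = 0 := by
      intro u hu hne
      have := pair_le_sum (P := G.Adj v) (f := s) hne hu hu0adj
      omega
    obtain ⟨e0, he0⟩ : ∃ e, 1 ≤ f (u0, e) := by
      by_contra hcon
      push_neg at hcon
      have : s u0 = 0 := Finset.sum_eq_zero (fun c _ => by have := hcon c; omega)
      omega
    have huniq : ∀ e, e ≠ e0 → f (u0, e) = 0 := by
      intro e hne
      have h := pair_le_sum (P := fun _ : β => True) (f := fun x => f (u0, x)) hne trivial trivial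
      simp only [if_true] at h
      have : (∑ x, f (u0, x)) = s u0 := rfl
      omega
    have hout : ∀ u c, G.Adj v u → (u, c) ≠ (u0, e0) → f (u, c) = 0 := by
      intro u c hu hne
      by_cases huu : u = u0
      · subst huu
        have hce : c ≠ e0 := by
          intro h; exact hne (by rw [h])
        exact huniq c hce
      · have hsu : s u = 0 := hother u hu huu
        exact (Finset.sum_eq_zero_iff.mp hsu) c (Finset.mem_univ c)
    refine ⟨u0, hu0adj, ?_⟩
    have hmin : min 2 (s u0) = 1 := by omega
    rw [hmin]
    by_contra hsv
    push_neg at hsv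
    -- s v ≤ 2
    have e2 : s v = ∑ c, f (v, c) := rfl
    obtain ⟨bs, hbsD, hbsnd⟩ := exists_undominated H h1 D (by omega)
    have hfbs : f (v, bs) = 0 := by
      have := (hDmem bs).not.mp hbsD; omega
    obtain ⟨⟨w, c⟩, hadj, hpos, hmv⟩ := hf.2 (v, bs) hfbs
    have hadj' : G.Adj v w ∨ (v = w ∧ H.Adj bs c) := hadj
    rcases hadj' with hGadj | ⟨heq, hHadj⟩
    · have hwc : (w, c) = (u0, e0) := by
        by_contra h
        exact absurd (hout w c hGadj h) (by omega)
      rw [hwc] at hmv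
      have h2 := hmv.2 (v, bs)
      rw [move_congr f (u0, e0) (v, bs)] at h2
      have hval : move f (u0, e0) (v, bs) (v, bs) = 1 := by simp [move]
      rw [hval] at h2
      rw [lex_nbrSum] at h2
      have hvu0 : v ≠ u0 := G.ne_of_adj hu0adj
      have hA : (∑ u, if G.Adj v u then (∑ c', move f (u0, e0) (v, bs) (u, c')) else 0) = 0 := by
        apply Finset.sum_eq_zero
        intro u _
        by_cases hu : G.Adj v u
        · rw [if_pos hu]
          apply Finset.sum_eq_zero
          intro c' _
          have hne : u ≠ v := (G.ne_of_adj hu).symm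
          by_cases huc : (u, c') = (u0, e0)
          · rw [huc]
            have : move f (u0, e0) (v, bs) (u0, e0) = f (u0, e0) - 1 := by
              simp [move, Prod.ext_iff, hvu0.symm]
            rw [this]
            have := hfle (u0, e0); omega
          · have : move f (u0, e0) (v, bs) (u, c') = f (u, c') := by
              simp only [move]
              rw [if_neg (by simp [Prod.ext_iff, hne]), if_neg huc]
            rw [this]
            exact hout u c' hu huc
        · rw [if_neg hu]
      have hB : (∑ e, if H.Adj bs e then move f (u0, e0) (v, bs) (v, e) else 0) = 0 := by
        apply Finset.sum_eq_zero
        intro e _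
        by_cases he : H.Adj bs e
        · rw [if_pos he]
          have hebs : e ≠ bs := fun h => H.irrefl (h ▸ he)
          have heD : e ∉ D := fun hmem => hbsnd e hmem he
          have : move f (u0, e0) (v, bs) (v, e) = f (v, e) := by
            simp only [move]
            rw [if_neg (by simp [Prod.ext_iff, hebs]), if_neg (by simp [Prod.ext_iff, hvu0])]
          rw [this]
          have := (hDmem e).not.mp heD; omega
        · rw [if_neg he]
      rw [hA, hB] at h2
      simp at h2
    · subst heq
      have hcD : c ∈ D := (hDmem c).mpr (by omega)
      exact hbsnd c hcD hHadj


lemma lower {α β : Type*} [Fintype α] [Fintype β] (G : SimpleGraph α) (H : SimpleGraph β)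
    (hG : NoIsolated G) [Nonempty β] (h1 : 3 ≤ domNum H) (f : α × β → ℕ)
    (hf : IsSecureWDom (lexProd G H) [1,1] f) :
    ∃ g, IsWDom G [2,2,2] g ∧ weight g ≤ weight f := by
  set s : α → ℕ := fun x => ∑ c, f (x, c) with hs
  have key : ∀ v, (∑ u, if G.Adj v u then s u else 0) ≤ 1 →
      ∃ u, G.Adj v u ∧ 2 - min 2 (s u) + 2 ≤ s v := fun v hv =>
    key_claim G H hG h1 f hf v hv
  set bad : α → Prop := fun v => (∑ u, if G.Adj v u then s u else 0) ≤ 1 with hbad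
  set ch : α → α := fun v => if h : bad v then (key v h).choose else v with hch
  have hch1 : ∀ v, bad v → G.Adj v (ch v) ∧ 2 - min 2 (s (ch v)) + 2 ≤ s v := by
    intro v h
    have hc : ch v = (key v h).choose := dif_pos h
    rw [hc]
    exact (key v h).choose_spec
  set g : α → ℕ := fun x => if (∃ v, bad v ∧ ch v = x) then 2 else min 2 (s x) with hg
  have hg2 : ∀ x, g x ≤ 2 := by
    intro x; simp only [hg]; split_ifs <;> omega
  have hgmin : ∀ x, min 2 (s x) ≤ g x := by
    intro x; simp only [hg]; split_ifs <;> omega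
  have hcov : ∀ v, 2 ≤ ∑ u, if G.Adj v u then g u else 0 := by
    intro v
    by_cases hb : bad v
    · obtain ⟨hadj, _⟩ := hch1 v hb
      have hgch : g (ch v) = 2 := by simp only [hg]; exact if_pos ⟨v, hb, rfl⟩
      have := le_sum_if (P := G.Adj v) (f := g) (ch v) hadj
      omega
    · have h2 : ¬((∑ u, if G.Adj v u then s u else 0) ≤ 1) := hb
      have hmin := min2_sum (G.Adj v) s
      have hle : (∑ u, if G.Adj v u then min 2 (s u) else 0) ≤
          ∑ u, if G.Adj v u then g u else 0 := by
        apply Finset.sum_le_sum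
        intro u _
        split_ifs with h
        · exact hgmin u
        · exact le_rfl
      omega
  refine ⟨g, ⟨fun v => by have := hg2 v; simp only [List.length_cons, List.length_nil]; omega, fun v => ?_⟩, ?_⟩
  · rw [getD222 (by have := hg2 v; omega), nbrSum_eq]
    exact hcov v
  · -- weight bound
    have hwf : weight f = ∑ x, s x := by
      rw [weight, Fintype.sum_prod_type]
    rw [weight, hwf]
    have step1 : (∑ x, g x) ≤ ∑ x, (min 2 (s x) +
        ∑ v ∈ Finset.univ.filter (fun v => bad v ∧ ch v = x), (2 - min 2 (s (ch v)))) := by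
      apply Finset.sum_le_sum
      intro x _
      by_cases hx : ∃ v, bad v ∧ ch v = x
      · obtain ⟨v0, hb0, hc0⟩ := hx
        have hmem : v0 ∈ Finset.univ.filter (fun v => bad v ∧ ch v = x) := by
          simp [hb0, hc0]
        have hterm : 2 - min 2 (s (ch v0)) ≤
            ∑ v ∈ Finset.univ.filter (fun v => bad v ∧ ch v = x), (2 - min 2 (s (ch v))) :=
          Finset.single_le_sum (f := fun v => 2 - min 2 (s (ch v)))
            (fun i _ => Nat.zero_le _) hmem
        have hgx : g x = 2 := by simp only [hg]; exact if_pos ⟨v0, hb0, hc0⟩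
        rw [hc0] at hterm
        omega
      · have hgx : g x = min 2 (s x) := by simp only [hg]; exact if_neg hx
        omega
    have step2 : (∑ x, (min 2 (s x) +
        ∑ v ∈ Finset.univ.filter (fun v => bad v ∧ ch v = x), (2 - min 2 (s (ch v)))))
        = (∑ x, min 2 (s x)) +
          ∑ v ∈ Finset.univ.filter bad, (2 - min 2 (s (ch v))) := by
      rw [Finset.sum_add_distrib]
      congr 1
      have hff : ∀ x : α, Finset.univ.filter (fun v => bad v ∧ ch v = x) =
          (Finset.univ.filter bad).filter (fun v => ch v = x) := by
        intro x; rw [Finset.filter_filter]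
      simp only [hff]
      exact Finset.sum_fiberwise (Finset.univ.filter bad) ch (fun v => 2 - min 2 (s (ch v)))
    have step3 : (∑ v ∈ Finset.univ.filter bad, (2 - min 2 (s (ch v)))) ≤
        ∑ v ∈ Finset.univ.filter bad, (s v - 2) := by
      apply Finset.sum_le_sum
      intro v hv
      have hb : bad v := (Finset.mem_filter.mp hv).2
      have := (hch1 v hb).2
      omega
    have step4 : (∑ x, min 2 (s x)) + (∑ v ∈ Finset.univ.filter bad, (s v - 2)) ≤
        ∑ x, s x := by
      rw [Finset.sum_filter, ← Finset.sum_add_distrib]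
      apply Finset.sum_le_sum
      intro x _
      by_cases hb : bad x
      · have h3 := (hch1 x hb).2
        rw [if_pos hb]
        omega
      · rw [if_neg hb]
        omega
    omega

lemma upper {α β : Type*} [Fintype α] [Fintype β] (G : SimpleGraph α) (H : SimpleGraph β)
    (b1 b2 : β) (hbne : b1 ≠ b2) (g : α → ℕ) (hg : IsWDom G [2,2,2] g) :
    ∃ F, IsSecureWDom (lexProd G H) [1,1] F ∧ weight F = weight g := by
  have hgle : ∀ v, g v ≤ 2 := by
    intro v; have := hg.1 v; simp only [List.length_cons, List.length_nil] at this; omega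
  have hcov : ∀ v, 2 ≤ ∑ u, if G.Adj v u then g u else 0 := by
    intro v
    have h := hg.2 v
    rwa [getD222 (by have := hgle v; omega), nbrSum_eq] at h
  set F : α × β → ℕ :=
    fun p => if (p.2 = b1 ∧ 1 ≤ g p.1) ∨ (p.2 = b2 ∧ g p.1 = 2) then 1 else 0 with hF
  have hFle : ∀ p, F p ≤ 1 := by
    intro p; simp only [hF]; split_ifs <;> omega
  have hF1 : ∀ v, 1 ≤ g v → F (v, b1) = 1 := by
    intro v h; simp [hF, h]
  have hF2 : ∀ v, g v = 2 → F (v, b2) = 1 := by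
    intro v h; simp [hF, h]
  have cond2 : ∀ p : α × β, 1 ≤ nbrSum (lexProd G H) F p := by
    rintro ⟨v, b⟩
    obtain ⟨u, hu, hg1⟩ := sum_if_pos_exists (P := G.Adj v) (f := g) (by have := hcov v; omega)
    have hadj : (lexProd G H).Adj (v, b) (u, b1) := Or.inl hu
    have := le_sum_if (P := (lexProd G H).Adj (v, b)) (f := F) (u, b1) hadj
    rw [nbrSum_eq]
    rw [hF1 u hg1] at this
    omega
  have hWD : IsWDom (lexProd G H) [1,1] F := by
    refine ⟨fun p => by have := hFle p; simp only [List.length_cons, List.length_nil]; omega, fun p => ?_⟩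
    rw [getD11 (by have := hFle p; omega)]
    exact cond2 p
  have secmove : ∀ src tgt : α × β,
      (∀ x : α, ∃ y e, G.Adj x y ∧ (y, e) ≠ src ∧ F (y, e) = 1) →
      IsWDom (lexProd G H) [1,1] (move F src tgt) := by
    intro src tgt hwit
    have hmle : ∀ q, move F src tgt q ≤ 1 := by
      intro q
      simp only [move]
      split_ifs
      · omega
      · have := hFle src; omega
      · exact hFle q
    refine ⟨fun q => by have := hmle q; simp only [List.length_cons, List.length_nil]; omega, ?_⟩
    rintro ⟨x, d⟩
    rw [getD11 (by have := hmle (x, d); omega), nbrSum_eq]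
    obtain ⟨y, e, hy, hne, hFy⟩ := hwit x
    have hval : 1 ≤ move F src tgt (y, e) := by
      simp only [move]
      rcases eq_or_ne (y, e) tgt with h | h
      · rw [if_pos h]
      · rw [if_neg h, if_neg hne]
        omega
    have hadj : (lexProd G H).Adj (x, d) (y, e) := Or.inl hy
    have := le_sum_if (P := (lexProd G H).Adj (x, d)) (f := move F src tgt) (y, e) hadj
    omega
  have hsec : IsSecureWDom (lexProd G H) [1,1] F := by
    refine ⟨hWD, ?_⟩
    rintro ⟨v, b⟩ hp0
    rcases dichotomy hgle (hcov v) with ⟨u, hu, hu2⟩ | ⟨u1, u2, hne12, hu1, hu2, h11, h12⟩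
    · refine ⟨(u, b2), Or.inl hu, by rw [hF2 u hu2]; omega, ?_⟩
      rw [move_congr F (u, b2) (v, b)]
      apply secmove
      intro x
      obtain ⟨y, hy, hgy⟩ := sum_if_pos_exists (P := G.Adj x) (f := g) (by have := hcov x; omega)
      refine ⟨y, b1, hy, ?_, hF1 y hgy⟩
      simp only [ne_eq, Prod.mk.injEq, not_and]
      intro _; exact hbne
    · refine ⟨(u1, b1), Or.inl hu1, by rw [hF1 u1 h11]; omega, ?_⟩
      rw [move_congr F (u1, b1) (v, b)]
      apply secmove
      intro x
      rcases dichotomy hgle (hcov x) with ⟨w, hw, hw2⟩ | ⟨w1, w2, hwne, hw1, hw2, hv1, hv2⟩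
      · refine ⟨w, b2, hw, ?_, hF2 w hw2⟩
        simp only [ne_eq, Prod.mk.injEq, not_and]
        intro _ h'; exact hbne h'.symm
      · by_cases hwu : w1 = u1
        · refine ⟨w2, b1, hw2, ?_, hF1 w2 hv2⟩
          simp only [ne_eq, Prod.mk.injEq, not_and]
          intro h _; exact hwne (hwu.trans h.symm)
        · refine ⟨w1, b1, hw1, ?_, hF1 w1 hv1⟩
          simp only [ne_eq, Prod.mk.injEq, not_and]
          intro h _; exact hwu h
  refine ⟨F, hsec, ?_⟩
  rw [weight, weight, Fintype.sum_prod_type]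
  apply Finset.sum_congr rfl
  intro v _
  have hb := hgle v
  have hsplit : ∀ b : β, F (v, b) =
      (if b = b1 ∧ 1 ≤ g v then 1 else 0) + (if b = b2 ∧ g v = 2 then 1 else 0) := by
    intro b
    simp only [hF]
    by_cases h1' : b = b1 ∧ 1 ≤ g v <;> by_cases h2' : b = b2 ∧ g v = 2
    · exact absurd (h1'.1.symm.trans h2'.1) hbne
    · rw [if_pos (Or.inl h1'), if_pos h1', if_neg h2']
    · rw [if_pos (Or.inr h2'), if_neg h1', if_pos h2']
    · rw [if_neg (by tauto), if_neg h1', if_neg h2']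
  have e1 : (∑ b, if b = b1 ∧ 1 ≤ g v then (1:ℕ) else 0) = if 1 ≤ g v then 1 else 0 := by
    by_cases h : 1 ≤ g v
    · rw [if_pos h]
      have hbb : ∀ b : β, (if b = b1 ∧ 1 ≤ g v then (1:ℕ) else 0) = if b = b1 then 1 else 0 := by
        intro b
        by_cases hb' : b = b1
        · rw [if_pos ⟨hb', h⟩, if_pos hb']
        · rw [if_neg (by tauto), if_neg hb']
      rw [Finset.sum_congr rfl (fun b _ => hbb b),
        Finset.sum_ite_eq' Finset.univ b1 (fun _ => (1:ℕ)), if_pos (Finset.mem_univ b1)]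
    · rw [if_neg h]
      exact Finset.sum_eq_zero (fun b _ => by rw [if_neg (by tauto)])
  have e2 : (∑ b, if b = b2 ∧ g v = 2 then (1:ℕ) else 0) = if g v = 2 then 1 else 0 := by
    by_cases h : g v = 2
    · rw [if_pos h]
      have hbb : ∀ b : β, (if b = b2 ∧ g v = 2 then (1:ℕ) else 0) = if b = b2 then 1 else 0 := by
        intro b
        by_cases hb' : b = b2
        · rw [if_pos ⟨hb', h⟩, if_pos hb']
        · rw [if_neg (by tauto), if_neg hb']
      rw [Finset.sum_congr rfl (fun b _ => hbb b),
        Finset.sum_ite_eq' Finset.univ b2 (fun _ => (1:ℕ)), if_pos (Finset.mem_univ b2)]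
    · rw [if_neg h]
      exact Finset.sum_eq_zero (fun b _ => by rw [if_neg (by tauto)])
  rw [Finset.sum_congr rfl (fun b _ => hsplit b), Finset.sum_add_distrib, e1, e2]
  split_ifs <;> omega

end SecureWAux


open SecureW in
theorem stmt_18 {α β : Type*} [Fintype α] [Fintype β]
    (G : SimpleGraph α) (H : SimpleGraph β)
    (hG : NoIsolated G) (hH : Nontrivial β)
    (h1 : 3 ≤ domNum H) :
    secWDomNum (lexProd G H) [1, 1] = wDomNum G [2, 2, 2] := by
  classical
  obtain ⟨b1, b2, hbne⟩ := hH
  have hNE : Nonempty β := ⟨b1⟩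
  have hS2 : {k | ∃ g, IsWDom G [2,2,2] g ∧ weight g = k}.Nonempty := by
    refine ⟨weight (fun _ : α => 2), ⟨fun _ => 2, ⟨⟨fun v => by simp, fun v => ?_⟩, rfl⟩⟩⟩
    obtain ⟨u, hu⟩ := hG v
    rw [SecureWAux.getD222 (by norm_num), SecureWAux.nbrSum_eq]
    have h2 : (2:ℕ) ≤ ∑ u, if G.Adj v u then 2 else 0 := by
      simpa using SecureWAux.le_sum_if (P := G.Adj v) (f := fun _ => (2:ℕ)) u hu
    omega
  obtain ⟨g0, hg0, hwg0⟩ := Nat.sInf_mem hS2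
  obtain ⟨F0, hF0, hwF0⟩ := SecureWAux.upper G H b1 b2 hbne g0 hg0
  have hS1 : {k | ∃ f, IsSecureWDom (lexProd G H) [1,1] f ∧ weight f = k}.Nonempty :=
    ⟨weight F0, F0, hF0, rfl⟩
  apply le_antisymm
  · calc secWDomNum (lexProd G H) [1,1] ≤ weight F0 := Nat.sInf_le ⟨F0, hF0, rfl⟩
      _ = weight g0 := hwF0
      _ = wDomNum G [2,2,2] := hwg0
  · obtain ⟨f, hf, hwf⟩ := Nat.sInf_mem hS1
    obtain ⟨g, hg, hle⟩ := SecureWAux.lower G H hG h1 f hf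
    calc wDomNum G [2,2,2] ≤ weight g := Nat.sInf_le ⟨g, hg, rfl⟩
      _ ≤ weight f := hle
      _ = secWDomNum (lexProd G H) [1,1] := hwf
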